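/- Let s > 5/3 and r > 0. For m ∈ ℕ and j ∈ {0,1}, set c_{m,0} = 0, c_{m,1} = m^{−1/2}, and define u_{m,j}(t,x₁,x₂) = (2π)^{−1} r m^{−s} e^{iΦ_{m,j}(t,x₁,x₂)} + c_{m,j}, where Φ_{m,j}(t,x₁,x₂) = m x₁ − x₂ + t·m·(m² + 1 + r²m^{−2s} + c_{m,j}²). Then ‖u_{m,1}(0) − u_{m,0}(0)‖_{H^s(𝕋²)} = m^{−1/2} → 0 as m → ∞, while there exists a constant c_r > 0, independent of m and t, such that for all t ∈ [0,1] and all m, ‖u_{m,1}(t) − u_{m,0}(t)‖_{H^s(𝕋²)} ≥ c_r·|sin t| − m^{−1/2}. -/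

import Mathlib

noncomputable section

open MeasureTheory

/-- Fundamental domain `(-π, π]²` for the torus `𝕋² = (ℝ/2πℤ)²`. -/
def Q2 : Set (ℝ × ℝ) := Set.Ioc (-Real.pi) Real.pi ×ˢ Set.Ioc (-Real.pi) Real.pi

/-- `2π`-periodicity in each variable: functions on the torus `𝕋²`. -/
def Periodic2 (u : ℝ × ℝ → ℂ) : Prop :=
  ∀ x : ℝ × ℝ, u (x.1 + 2 * Real.pi, x.2) = u x ∧ u (x.1, x.2 + 2 * Real.pi) = u x

/-- The character `e^{i k·x}`. -/
def eK (k : ℤ × ℤ) (x : ℝ × ℝ) : ℂ :=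
  Complex.exp (Complex.I * (((k.1 : ℝ) * x.1 + (k.2 : ℝ) * x.2 : ℝ) : ℂ))

/-- Fourier coefficient `û(k) = (2π)^{-2} ∫_{Q2} u(x) e^{-i k·x} dx`. -/
def fcoef (u : ℝ × ℝ → ℂ) (k : ℤ × ℤ) : ℂ :=
  ((2 * Real.pi : ℂ) ^ 2)⁻¹ * ∫ x in Q2, u x * eK (-k) x

/-- Bessel weight `(1+|k|²)^{s/2}`. -/
def jweight (s : ℝ) (k : ℤ × ℤ) : ℝ :=
  (1 + (k.1 : ℝ) ^ 2 + (k.2 : ℝ) ^ 2) ^ (s / 2)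

/-- The Sobolev norm `‖u‖_{H^s} = ‖J^s u‖_{L²} = (Σ_k (1+|k|²)^s |û(k)|²)^{1/2}`,
with respect to the normalized measure `(2π)^{-2} dx`; `hnorm 0` is the `L²` norm. -/
def hnorm (s : ℝ) (u : ℝ × ℝ → ℂ) : ℝ :=
  Real.sqrt (∑' k : ℤ × ℤ, (jweight s k * ‖fcoef u k‖) ^ 2)

/-- Membership in `H^s(𝕋²)`. -/
def MemHs (s : ℝ) (u : ℝ × ℝ → ℂ) : Prop :=
  Periodic2 u ∧ IntegrableOn u Q2 ∧
    Summable (fun k : ℤ × ℤ => (jweight s k * ‖fcoef u k‖) ^ 2)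

/-- `L^∞(𝕋²)` norm. -/
def supnorm (u : ℝ × ℝ → ℂ) : ℝ := ⨆ x : ℝ × ℝ, ‖u x‖

/-- `‖∇u‖_{L^∞(𝕋²)}`. -/
def gradsupnorm (u : ℝ × ℝ → ℂ) : ℝ := ⨆ x : ℝ × ℝ, ‖fderiv ℝ u x‖

/-- Partial derivative `∂_{x₁}`. -/
def pd1 (u : ℝ × ℝ → ℂ) : ℝ × ℝ → ℂ := fun x => fderiv ℝ u x (1, 0)

/-- Partial derivative `∂_{x₂}`. -/
def pd2 (u : ℝ × ℝ → ℂ) : ℝ × ℝ → ℂ := fun x => fderiv ℝ u x (0, 1)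

/-- Dispersion relation `k₁³ + k₁k₂²`. -/
def disp (k : ℤ × ℤ) : ℝ := (k.1 : ℝ) ^ 3 + (k.1 : ℝ) * (k.2 : ℝ) ^ 2

/-- The linear mZK propagator acting on a sequence of Fourier coefficients:
`(W(t)φ)^(k) = e^{i(k₁³+k₁k₂²)t} φ̂(k)`. -/
def WofCoef (a : ℤ × ℤ → ℂ) (t : ℝ) (x : ℝ × ℝ) : ℂ :=
  ∑' k : ℤ × ℤ, Complex.exp (Complex.I * (disp k : ℂ) * (t : ℂ)) * a k * eK k x

/-- The linear mZK propagator `W(t)`. -/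
def Wprop (t : ℝ) (u : ℝ × ℝ → ℂ) : ℝ × ℝ → ℂ := WofCoef (fcoef u) t

/-- The mZK nonlinearity `|u|² ∂_{x₁} u` (without the factor 6). -/
def nonlin (u : ℝ × ℝ → ℂ) : ℝ × ℝ → ℂ :=
  fun x => u x * (starRingEnd ℂ) (u x) * pd1 u x

/-- Continuity of `t ↦ u(t)` in the `H^s` norm on `I`, i.e. `u ∈ C(I, H^s)`. -/
def ContHsOn (s : ℝ) (I : Set ℝ) (u : ℝ → ℝ × ℝ → ℂ) : Prop :=
  ∀ t ∈ I, ∀ ε > 0, ∃ δ > 0, ∀ t' ∈ I, |t' - t| < δ →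
    hnorm s (fun x => u t' x - u t x) < ε

/-- A strong solution of the mZK equation `∂_t u + ∂_{x₁}Δu = 6|u|²∂_{x₁}u`
on an interval `I ∋ 0` with datum `u₀`: a continuous curve in `H^s`
satisfying the Duhamel formula. -/
structure IsStrongSolution (s : ℝ) (I : Set ℝ) (u₀ : ℝ × ℝ → ℂ)
    (u : ℝ → ℝ × ℝ → ℂ) : Prop where
  mem : ∀ t ∈ I, MemHs s (u t)
  cont : ContHsOn s I u
  init : ∀ x, u 0 x = u₀ x
  duhamel : ∀ t ∈ I, ∀ x,
    u t x = Wprop t u₀ x + 6 * ∫ τ in (0:ℝ)..t, Wprop (t - τ) (nonlin (u τ)) x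

/-- The phase `Φ_{m,j}(t,x₁,x₂) = m x₁ − x₂ + t·m·(m² + 1 + r²m^{−2s} + c²)`. -/
def phaseMJ (s r : ℝ) (m : ℕ) (c : ℝ) (t : ℝ) (x : ℝ × ℝ) : ℝ :=
  (m : ℝ) * x.1 - x.2 +
    t * (m : ℝ) * ((m : ℝ) ^ 2 + 1 + r ^ 2 * (m : ℝ) ^ (-(2 * s)) + c ^ 2)

/-- The approximate solution `u_{m,j}(t,x) = (2π)^{−1} r m^{−s} e^{iΦ_{m,j}} + c_{m,j}`,
where `c = c_{m,j}` (`c_{m,0} = 0`, `c_{m,1} = m^{−1/2}`). -/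
def umj (s r : ℝ) (m : ℕ) (c : ℝ) (t : ℝ) (x : ℝ × ℝ) : ℂ :=
  (2 * Real.pi : ℂ)⁻¹ * (r : ℂ) * (((m : ℝ) ^ (-s) : ℝ) : ℂ) *
    Complex.exp (Complex.I * (phaseMJ s r m c t x : ℂ)) + (c : ℂ)

/-- `c_{m,1} = m^{-1/2}`. -/
def cm1 (m : ℕ) : ℝ := (m : ℝ) ^ (-(1 / 2 : ℝ))

/-! At every time both approximate solutions are the same plane wave `e^{i(m x₁ - x₂)}` up to a
constant phase factor, and the two phases drift apart at speed `m c²`, which is `1` for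
`c = m^{-1/2}`. So `u_{m,1}(t) - u_{m,0}(t)` is one Fourier mode plus the constant `m^{-1/2}`, and
Parseval computes its `H^s` norm exactly: the mode has amplitude `r m^{-s} |e^{it} - 1| / 2π` and
Sobolev weight at least `m^s`, while `|e^{it} - 1| ≥ |sin t|`. -/

open Complex Real Set

lemma eK_add (p q : ℤ × ℤ) (x : ℝ × ℝ) : eK (p + q) x = eK p x * eK q x := by
  simp only [eK, ← Complex.exp_add, Prod.fst_add, Prod.snd_add]
  push_cast
  ring_nf

lemma eK_zero (x : ℝ × ℝ) : eK 0 x = 1 := by simp [eK]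

lemma norm_eK (k : ℤ × ℤ) (x : ℝ × ℝ) : ‖eK k x‖ = 1 := by
  rw [eK, mul_comm, Complex.norm_exp_ofReal_mul_I]

lemma continuous_eK (k : ℤ × ℤ) : Continuous (eK k) := by
  unfold eK
  fun_prop

lemma measurableSet_Q2 : MeasurableSet Q2 := measurableSet_Ioc.prod measurableSet_Ioc

lemma integrableOn_Q2_of_continuous {u : ℝ × ℝ → ℂ} (hu : Continuous u) : IntegrableOn u Q2 :=
  (hu.continuousOn.integrableOn_compact
    ((isCompact_Icc (a := -π) (b := π)).prod isCompact_Icc)).mono_set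
    (prod_mono Ioc_subset_Icc_self Ioc_subset_Icc_self)

lemma MeasureTheory.IntegrableOn.mul_eK {u : ℝ × ℝ → ℂ} (hu : IntegrableOn u Q2) (k : ℤ × ℤ) :
    IntegrableOn (fun x => u x * eK k x) Q2 :=
  Integrable.mul_bdd hu (continuous_eK k).aestronglyMeasurable
    (ae_of_all _ fun x => (norm_eK k x).le)

lemma integral_Ioc_exp_I_mul_int (n : ℤ) :
    ∫ x in Ioc (-π) π, exp (I * n * x) = if n = 0 then ((2 * π : ℝ) : ℂ) else 0 := by
  rw [← intervalIntegral.integral_of_le (by linarith [pi_pos])]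
  split_ifs with hn
  · simp [hn]
    ring
  · rw [integral_exp_mul_complex (mul_ne_zero I_ne_zero (Int.cast_ne_zero.mpr hn))]
    -- `e^{inπ} = e^{-inπ}` because `2πn ∈ 2πℤ`
    rw [show I * n * ((π : ℝ) : ℂ) = I * n * ((-π : ℝ) : ℂ) + n * (2 * π * I) by
      push_cast; ring, Complex.exp_add, exp_int_mul_two_pi_mul_I, mul_one, sub_self, zero_div]

lemma setIntegral_Q2_eK (k : ℤ × ℤ) :
    ∫ x in Q2, eK k x = if k = 0 then ((2 * π : ℝ) : ℂ) ^ 2 else 0 := by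
  have h_sep : ∀ x : ℝ × ℝ, eK k x = exp (I * k.1 * x.1) * exp (I * k.2 * x.2) := by
    intro x
    rw [eK, ← Complex.exp_add]
    push_cast
    ring_nf
  rw [setIntegral_congr_fun measurableSet_Q2 (fun x _ => h_sep x), Q2, Measure.volume_eq_prod,
    setIntegral_prod_mul (fun a : ℝ => exp (I * k.1 * a)) (fun b : ℝ => exp (I * k.2 * b)),
    integral_Ioc_exp_I_mul_int, integral_Ioc_exp_I_mul_int]
  obtain ⟨k₁, k₂⟩ := k
  by_cases h₁ : k₁ = 0 <;> by_cases h₂ : k₂ = 0 <;> simp [h₁, h₂, sq]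

lemma fcoef_add {u v : ℝ × ℝ → ℂ} (hu : IntegrableOn u Q2) (hv : IntegrableOn v Q2)
    (k : ℤ × ℤ) : fcoef (fun x => u x + v x) k = fcoef u k + fcoef v k := by
  simp only [fcoef, add_mul, integral_add (hu.mul_eK _) (hv.mul_eK _), mul_add]

lemma fcoef_const_mul (C : ℂ) (u : ℝ × ℝ → ℂ) (k : ℤ × ℤ) :
    fcoef (fun x => C * u x) k = C * fcoef u k := by
  simp only [fcoef, mul_assoc, integral_const_mul]
  ring

lemma fcoef_eK (p k : ℤ × ℤ) : fcoef (eK p) k = if k = p then 1 else 0 := by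
  have h2π : ((2 * π : ℝ) : ℂ) ≠ 0 := ofReal_ne_zero.mpr (by positivity)
  simp only [fcoef, ← eK_add, setIntegral_Q2_eK, add_neg_eq_zero, eq_comm (a := p)]
  split_ifs
  · push_cast at h2π ⊢
    field_simp
  · simp

lemma fcoef_const (D : ℂ) (k : ℤ × ℤ) : fcoef (fun _ => D) k = if k = 0 then D else 0 := by
  rw [show (fun _ => D) = fun x => D * eK 0 x by simp [eK_zero], fcoef_const_mul, fcoef_eK]
  split_ifs <;> simp

lemma hnorm_const_mul_eK_add_const (s : ℝ) {p : ℤ × ℤ} (hp : p ≠ 0) (C D : ℂ) :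
    hnorm s (fun x => C * eK p x + D) = √((jweight s p * ‖C‖) ^ 2 + ‖D‖ ^ 2) := by
  have hcoef : ∀ k, fcoef (fun x => C * eK p x + D) k =
      (if k = p then C else 0) + (if k = 0 then D else 0) := by
    intro k
    rw [fcoef_add (u := fun x => C * eK p x) (v := fun _ => D)
        (integrableOn_Q2_of_continuous (continuous_const.mul (continuous_eK p)))
        (integrableOn_Q2_of_continuous continuous_const),
      fcoef_const_mul, fcoef_eK, fcoef_const]
    simp
  rw [hnorm, tsum_eq_sum (s := {p, 0}) fun k hk => by
    simp only [Finset.mem_insert, Finset.mem_singleton, not_or] at hk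
    simp [hcoef, hk.1, hk.2], Finset.sum_pair hp]
  simp [hcoef, hp, Ne.symm hp, jweight]

lemma rpow_abs_fst_le_jweight {s : ℝ} (hs : 0 ≤ s) (k : ℤ × ℤ) :
    |(k.1 : ℝ)| ^ s ≤ jweight s k := by
  rw [jweight, show |(k.1 : ℝ)| ^ s = ((k.1 : ℝ) ^ 2) ^ (s / 2) by
    rw [← sq_abs, ← Real.rpow_natCast, ← Real.rpow_mul (abs_nonneg _)]
    ring_nf]
  gcongr
  nlinarith [sq_nonneg (k.2 : ℝ)]

lemma umj_zero_eq_mul_eK (s r : ℝ) (m : ℕ) (t : ℝ) (x : ℝ × ℝ) :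
    umj s r m 0 t x = umj s r m 0 t 0 * eK (m, -1) x := by
  simp only [umj, phaseMJ, eK, Prod.fst_zero, Prod.snd_zero, ofReal_zero, add_zero, mul_zero,
    sub_zero, zero_add, mul_assoc, ← Complex.exp_add]
  push_cast
  ring_nf

lemma phaseMJ_eq_add (s r : ℝ) (m : ℕ) (c t : ℝ) (x : ℝ × ℝ) :
    phaseMJ s r m c t x = phaseMJ s r m 0 t x + t * m * c ^ 2 := by
  unfold phaseMJ
  ring

lemma umj_sub_umj_zero (s r : ℝ) (m : ℕ) (c t : ℝ) (x : ℝ × ℝ) :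
    umj s r m c t x - umj s r m 0 t x =
      (exp (I * (t * m * c ^ 2 : ℝ)) - 1) * umj s r m 0 t x + c := by
  rw [umj, phaseMJ_eq_add, ofReal_add, mul_add, Complex.exp_add, umj]
  push_cast
  ring

lemma norm_umj_zero_origin (s r : ℝ) (m : ℕ) (t : ℝ) :
    ‖umj s r m 0 t 0‖ = |r| * (m : ℝ) ^ (-s) / (2 * π) := by
  rw [umj, ofReal_zero, add_zero, norm_mul, mul_comm I, norm_exp_ofReal_mul_I, mul_one,
    norm_mul, norm_mul, norm_inv, norm_real, norm_real, Real.norm_eq_abs, Real.norm_eq_abs,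
    abs_of_nonneg (by positivity : (0 : ℝ) ≤ (m : ℝ) ^ (-s)),
    show (2 * π : ℂ) = ((2 * π : ℝ) : ℂ) by push_cast; rfl, norm_real,
    Real.norm_of_nonneg (by positivity)]
  ring

lemma hnorm_umj_sub_umj_zero (s r : ℝ) (m : ℕ) (c t : ℝ) :
    hnorm s (fun x => umj s r m c t x - umj s r m 0 t x) =
      √((jweight s (m, -1) * (‖exp (I * (t * m * c ^ 2 : ℝ)) - 1‖ *
        (|r| * (m : ℝ) ^ (-s) / (2 * π)))) ^ 2 + c ^ 2) := by
  have hfun : (fun x => umj s r m c t x - umj s r m 0 t x) = fun x =>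
      (exp (I * (t * m * c ^ 2 : ℝ)) - 1) * umj s r m 0 t 0 * eK (m, -1) x + c := by
    funext x
    rw [umj_sub_umj_zero, umj_zero_eq_mul_eK s r m t x]
    ring
  rw [hfun, hnorm_const_mul_eK_add_const s (by simp [Prod.ext_iff]), norm_mul,
    norm_umj_zero_origin, norm_real, Real.norm_eq_abs, sq_abs]

lemma abs_sin_le_norm_exp_I_mul_sub_one (t : ℝ) : |Real.sin t| ≤ ‖exp (I * t) - 1‖ := by
  have him : (exp (I * t) - 1).im = Real.sin t := by
    rw [mul_comm]
    simp [exp_ofReal_mul_I_im]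
  exact him ▸ abs_im_le_norm _

lemma cm1_nonneg (m : ℕ) : 0 ≤ cm1 m := by
  unfold cm1
  positivity

lemma natCast_mul_cm1_sq {m : ℕ} (hm : m ≠ 0) : (m : ℝ) * cm1 m ^ 2 = 1 := by
  rw [cm1, ← Real.rpow_natCast, ← Real.rpow_mul (Nat.cast_nonneg m)]
  norm_num
  rw [Real.rpow_neg_one]
  exact mul_inv_cancel₀ (by exact_mod_cast hm)

lemma hnorm_umj_cm1_sub_umj_zero_at_zero (s r : ℝ) (m : ℕ) :
    hnorm s (fun x => umj s r m (cm1 m) 0 x - umj s r m 0 0 x) = cm1 m := by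
  rw [hnorm_umj_sub_umj_zero]
  simp [Real.sqrt_sq (cm1_nonneg m)]

lemma abs_sin_le_hnorm_umj_cm1_sub_umj_zero {s : ℝ} (hs : 0 ≤ s) (r : ℝ) {m : ℕ} (hm : 1 ≤ m)
    (t : ℝ) :
    |r| / (2 * π) * |Real.sin t| ≤ hnorm s (fun x => umj s r m (cm1 m) t x - umj s r m 0 t x) := by
  have hm₀ : (0 : ℝ) < m := by exact_mod_cast hm
  have hphase : t * m * cm1 m ^ 2 = t := by
    rw [mul_assoc, natCast_mul_cm1_sq (by omega), mul_one]
  have hweight : 1 ≤ jweight s (m, -1) * (m : ℝ) ^ (-s) := by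
    have := rpow_abs_fst_le_jweight hs ((m : ℤ), -1)
    simp only [Int.cast_natCast, abs_of_pos hm₀] at this
    calc (1 : ℝ) = (m : ℝ) ^ s * (m : ℝ) ^ (-s) := by rw [← Real.rpow_add hm₀]; simp
      _ ≤ _ := by gcongr
  rw [hnorm_umj_sub_umj_zero, hphase]
  calc |r| / (2 * π) * |Real.sin t|
      ≤ |r| / (2 * π) * ‖exp (I * t) - 1‖ * (jweight s (m, -1) * (m : ℝ) ^ (-s)) := by
        rw [← mul_one (|r| / (2 * π) * |Real.sin t|)]
        gcongr
        exact abs_sin_le_norm_exp_I_mul_sub_one t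
    _ = jweight s (m, -1) * (‖exp (I * t) - 1‖ * (|r| * (m : ℝ) ^ (-s) / (2 * π))) := by ring
    _ ≤ _ := Real.le_sqrt_of_sq_le (le_add_of_nonneg_right (sq_nonneg _))

/-- **The approximate solutions separate** (Step 1 of the proof of Theorem 1.3): for
`s > 5/3` and `r > 0`, the data satisfy `‖u_{m,1}(0) − u_{m,0}(0)‖_{H^s} = m^{−1/2} → 0`
as `m → ∞`, while there is `c_r > 0`, independent of `m` and `t`, with
`‖u_{m,1}(t) − u_{m,0}(t)‖_{H^s} ≥ c_r·|sin t| − m^{−1/2}` for all `t ∈ [0,1]` and all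
`m ≥ 1`. -/
theorem approximate_solutions_separate {s r : ℝ} (hs : s > 5 / 3) (hr : 0 < r) :
    (∀ m : ℕ, 1 ≤ m →
      hnorm s (fun x => umj s r m (cm1 m) 0 x - umj s r m 0 0 x) = cm1 m) ∧
    Filter.Tendsto
      (fun m : ℕ => hnorm s (fun x => umj s r m (cm1 m) 0 x - umj s r m 0 0 x))
      Filter.atTop (nhds 0) ∧
    ∃ c > 0, ∀ m : ℕ, 1 ≤ m → ∀ t ∈ Set.Icc (0:ℝ) 1,
      c * |Real.sin t| - cm1 m ≤
        hnorm s (fun x => umj s r m (cm1 m) t x - umj s r m 0 t x) := by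
  refine ⟨fun m _ => hnorm_umj_cm1_sub_umj_zero_at_zero s r m, ?_,
    r / (2 * π), by positivity, fun m hm t _ => ?_⟩
  · simp_rw [hnorm_umj_cm1_sub_umj_zero_at_zero]
    exact (tendsto_rpow_neg_atTop (by norm_num)).comp tendsto_natCast_atTop_atTop
  · have hsep := abs_sin_le_hnorm_umj_cm1_sub_umj_zero (show 0 ≤ s by linarith) r hm t
    rw [abs_of_pos hr] at hsep
    linarith [cm1_nonneg m]
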